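/- (Basic properties for OLFM) Let S be an OLFM system on an odd number n of actors. Then the satisfaction score SAT_S satisfies: (1) symmetry: if distinct actors i, j have S(i) = S(j) and P(i) = P(j), then SAT_S(i) = SAT_S(j); (2) dictator property: if S(i) = V \ {i}, then SAT_S(i) = 2^n; and (3) dictated independence: if S' is another OLFM system on the same vertex set and |P_G(i)| = |P_{G'}(i)| = 1, then SAT_S(i) = SAT_{S'}(i). -/

import Mathlib

open Finset

/-- The set of predecessors of `i` in the digraph with edge set `E`. -/
def preds {n : ℕ} (E : Finset (Fin n × Fin n)) (i : Fin n) : Finset (Fin n) :=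
  Finset.univ.filter (fun j => (j, i) ∈ E)

/-- The set of successors of `i` in the digraph with edge set `E`. -/
def succs {n : ℕ} (E : Finset (Fin n × Fin n)) (i : Fin n) : Finset (Fin n) :=
  Finset.univ.filter (fun j => (i, j) ∈ E)

/-- `E` is the edge set of an OLF system: every edge runs from a vertex with no
predecessors (an opinion leader) to a vertex with no successors (a follower). -/
def IsOLF {n : ℕ} (E : Finset (Fin n × Fin n)) : Prop :=
  ∀ e ∈ E, preds E e.1 = ∅ ∧ succs E e.2 = ∅

/-- One step of the unanimity rule: actor `i` adopts the common decision of its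
predecessors (as recorded in `c`) if they are nonempty and unanimous, and keeps
its own initial decision `x i` otherwise. -/
def unanStep {n : ℕ} (E : Finset (Fin n × Fin n)) (x c : Fin n → Bool) (i : Fin n) : Bool :=
  if (preds E i).Nonempty ∧ ∀ j ∈ preds E i, c j = true then true
  else if (preds E i).Nonempty ∧ ∀ j ∈ preds E i, c j = false then false
  else x i

/-- The collective decision vector of an OLF system. -/
def olfVec {n : ℕ} (E : Finset (Fin n × Fin n)) (x : Fin n → Bool) : Fin n → Bool :=
  unanStep E x x

/-- Simple majority over a decision vector. -/
def majority {n : ℕ} (c : Fin n → Bool) : Bool :=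
  decide ((Finset.univ.filter (fun i => c i = true)).card >
          (Finset.univ.filter (fun i => c i = false)).card)

/-- The collective decision function of an OLF system. -/
def olfC {n : ℕ} (E : Finset (Fin n × Fin n)) (x : Fin n → Bool) : Bool :=
  majority (olfVec E x)

/-- The satisfaction score of actor `i` under a collective decision making model `C`. -/
def SAT {n : ℕ} (C : (Fin n → Bool) → Bool) (i : Fin n) : ℕ :=
  (Finset.univ.filter (fun x : Fin n → Bool => C x = x i)).card

/-- `layer` witnesses that `E` is a layered digraph: every edge goes from a
vertex in some layer to a vertex in the layer immediately below. -/
def IsLayered {n : ℕ} (E : Finset (Fin n × Fin n)) (layer : Fin n → ℕ) : Prop :=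
  ∀ e ∈ E, layer e.2 = layer e.1 + 1

/-- `E` is the edge set of an OLFM system, i.e. a layered digraph. -/
def IsOLFM {n : ℕ} (E : Finset (Fin n × Fin n)) : Prop :=
  ∃ layer : Fin n → ℕ, IsLayered E layer

/-- The collective decision vector of an OLFM system, computed layer by layer:
since each layer only depends on the one above it, iterating the unanimity step
`n` times computes the stable, layer-by-layer collective decision vector. -/
def olfmVec {n : ℕ} (E : Finset (Fin n × Fin n)) (x : Fin n → Bool) : Fin n → Bool :=
  (fun c => unanStep E x c)^[n] x

/-- The collective decision function of an OLFM system. -/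
def olfmC {n : ℕ} (E : Finset (Fin n × Fin n)) (x : Fin n → Bool) : Bool :=
  majority (olfmVec E x)

/-! Each actor's collective decision depends only on the decisions of its predecessors, so in a
layered digraph a change of the starting vector of the iteration travels down one layer per step
and dies out after `n` steps, as there are at most `n` layers. Hence `olfmVec E x` is the unique
fixed point of the unanimity step. Symmetry follows because swapping `i` and `j` is an
automorphism of the digraph; the dictator property because the constant vector `x i` is that
fixed point; dictated independence because an actor with a single predecessor never has its own
decision read, so flipping it is a bijection between the inputs it agrees with and those it
disagrees with. -/

section Digraph

variable {n : ℕ} {E : Finset (Fin n × Fin n)}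

@[simp]
lemma mem_preds {i j : Fin n} : i ∈ preds E j ↔ (i, j) ∈ E := by
  simp [preds]

@[simp]
lemma mem_succs {i j : Fin n} : j ∈ succs E i ↔ (i, j) ∈ E := by
  simp [succs]

lemma IsLayered.preds_eq_empty_of_succs {layer : Fin n → ℕ} (hL : IsLayered E layer) {i : Fin n}
    (hs : succs E i = univ \ {i}) : preds E i = ∅ := by
  refine eq_empty_of_forall_notMem fun a ha => ?_
  have hai : layer i = layer a + 1 := hL (a, i) (mem_preds.mp ha)
  have hne : a ≠ i := by rintro rfl; omega
  have hia : layer a = layer i + 1 := hL (i, a) (mem_succs.mp (by simp [hs, hne]))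
  omega

lemma mem_swap_swap_iff {i j : Fin n} (hs : succs E i = succs E j) (hp : preds E i = preds E j)
    (a b : Fin n) : (Equiv.swap i j a, Equiv.swap i j b) ∈ E ↔ (a, b) ∈ E := by
  rw [← mem_succs, Equiv.apply_swap_eq_self hs, mem_succs, ← mem_preds,
    Equiv.apply_swap_eq_self hp, mem_preds]

lemma preds_perm {σ : Equiv.Perm (Fin n)} (hσ : ∀ a b, (σ a, σ b) ∈ E ↔ (a, b) ∈ E) (v : Fin n) :
    preds E (σ v) = (preds E v).map σ.toEmbedding := by
  ext u
  rw [mem_map_equiv, mem_preds, mem_preds, ← hσ (σ.symm u), Equiv.apply_symm_apply]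

end Digraph

section Forgetting

variable {n : ℕ} {E : Finset (Fin n × Fin n)} {layer : Fin n → ℕ}
  {F : (Fin n → Bool) → Fin n → Bool}

lemma le_and_Icc_subset_image_of_iterate_ne (hL : IsLayered E layer)
    (hF : ∀ c c' j, (∀ q ∈ preds E j, c q = c' q) → F c j = F c' j) {y y' : Fin n → Bool} :
    ∀ (k : ℕ) (j : Fin n), F^[k] y j ≠ F^[k] y' j →
      k ≤ layer j ∧ Icc (layer j - k) (layer j) ⊆ univ.image layer := by
  intro k
  induction k with
  | zero => exact fun j _ => ⟨Nat.zero_le _, by simp⟩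
  | succ k ih =>
    intro j hj
    rw [Function.iterate_succ_apply', Function.iterate_succ_apply'] at hj
    obtain ⟨q, hq, hqj⟩ : ∃ q ∈ preds E j, F^[k] y q ≠ F^[k] y' q := by
      by_contra! h
      exact hj (hF _ _ j h)
    have hlayer : layer j = layer q + 1 := hL (q, j) (mem_preds.mp hq)
    obtain ⟨hk, hsub⟩ := ih q hqj
    refine ⟨by omega, fun m hm => ?_⟩
    rw [mem_Icc] at hm
    rcases eq_or_lt_of_le hm.2 with rfl | hlt
    · exact mem_image_of_mem layer (mem_univ j)
    · exact hsub (mem_Icc.mpr ⟨by omega, by omega⟩)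

lemma iterate_eq_of_isLayered (hL : IsLayered E layer)
    (hF : ∀ c c' j, (∀ q ∈ preds E j, c q = c' q) → F c j = F c' j) (y y' : Fin n → Bool) :
    F^[n] y = F^[n] y' := by
  funext j
  by_contra h
  obtain ⟨hk, hsub⟩ := le_and_Icc_subset_image_of_iterate_ne hL hF n j h
  have := (card_le_card hsub).trans card_image_le
  rw [Nat.card_Icc, card_univ, Fintype.card_fin] at this
  omega

end Forgetting

section UnanimityStep

variable {n : ℕ} {E : Finset (Fin n × Fin n)}

lemma unanStep_congr (x : Fin n → Bool) {c c' : Fin n → Bool} (j : Fin n)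
    (h : ∀ q ∈ preds E j, c q = c' q) : unanStep E x c j = unanStep E x c' j := by
  have hall : ∀ b, (∀ q ∈ preds E j, c q = b) ↔ ∀ q ∈ preds E j, c' q = b :=
    fun b => forall₂_congr fun q hq => by rw [h q hq]
  simp only [unanStep, hall]

lemma unanStep_const_of_nonempty (x : Fin n → Bool) (b : Bool) {j : Fin n}
    (hj : (preds E j).Nonempty) : unanStep E x (fun _ => b) j = b := by
  obtain ⟨q, hq⟩ := hj
  cases b
  · rw [unanStep, if_neg fun h => Bool.false_ne_true (h.2 q hq), if_pos ⟨⟨q, hq⟩, fun _ _ => rfl⟩]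
  · rw [unanStep, if_pos ⟨⟨q, hq⟩, fun _ _ => rfl⟩]

lemma unanStep_of_preds_eq_empty (x c : Fin n → Bool) {j : Fin n} (hj : preds E j = ∅) :
    unanStep E x c j = x j := by
  simp [unanStep, hj]

lemma unanStep_update_of_preds_eq_singleton {x : Fin n → Bool} {i p : Fin n}
    (hp : preds E i = {p}) (b : Bool) : unanStep E (Function.update x i b) = unanStep E x := by
  funext c j
  rcases eq_or_ne j i with rfl | hji
  · cases hc : c p <;> simp [unanStep, hp, hc]
  · simp only [unanStep, Function.update_of_ne hji]

lemma unanStep_comp_perm {σ : Equiv.Perm (Fin n)} (hσ : ∀ a b, (σ a, σ b) ∈ E ↔ (a, b) ∈ E)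
    (x c : Fin n → Bool) : unanStep E (x ∘ σ) (c ∘ σ) = unanStep E x c ∘ σ := by
  funext v
  simp only [unanStep, Function.comp_apply, preds_perm hσ, map_nonempty, forall_mem_map,
    Equiv.coe_toEmbedding]

end UnanimityStep

section CollectiveDecision

variable {n : ℕ} {E : Finset (Fin n × Fin n)} {layer : Fin n → ℕ}

lemma olfmVec_eq_iterate (hL : IsLayered E layer) (x y : Fin n → Bool) :
    olfmVec E x = (unanStep E x)^[n] y :=
  iterate_eq_of_isLayered hL (fun _ _ => unanStep_congr x) x y

lemma olfmVec_eq_of_unanStep_eq (hL : IsLayered E layer) {x c : Fin n → Bool}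
    (hc : unanStep E x c = c) : olfmVec E x = c := by
  rw [olfmVec_eq_iterate hL x c, Function.iterate_fixed hc]

lemma olfmVec_eq_const_of_succs_eq (hL : IsLayered E layer) {i : Fin n}
    (hs : succs E i = univ \ {i}) (x : Fin n → Bool) : olfmVec E x = fun _ => x i := by
  refine olfmVec_eq_of_unanStep_eq hL (funext fun j => ?_)
  rcases eq_or_ne j i with rfl | hji
  · exact unanStep_of_preds_eq_empty x _ (hL.preds_eq_empty_of_succs hs)
  · exact unanStep_const_of_nonempty x _ ⟨i, mem_preds.mpr (mem_succs.mp (by simp [hs, hji]))⟩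

lemma olfmC_update_of_card_preds_eq_one (hL : IsLayered E layer) {i : Fin n}
    (hi : (preds E i).card = 1) (x : Fin n → Bool) (b : Bool) :
    olfmC E (Function.update x i b) = olfmC E x := by
  obtain ⟨p, hp⟩ := card_eq_one.mp hi
  rw [olfmC, olfmVec_eq_iterate hL _ x, unanStep_update_of_preds_eq_singleton hp]
  rfl

lemma olfmVec_comp_perm {σ : Equiv.Perm (Fin n)} (hσ : ∀ a b, (σ a, σ b) ∈ E ↔ (a, b) ∈ E)
    (x : Fin n → Bool) : olfmVec E (x ∘ σ) = olfmVec E x ∘ σ := by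
  have hsemi : Function.Semiconj (· ∘ σ) (unanStep E x) (unanStep E (x ∘ σ)) :=
    fun c => (unanStep_comp_perm hσ x c).symm
  exact (hsemi.iterate_right n x).symm

lemma majority_const (hn : 0 < n) (b : Bool) : majority (fun _ : Fin n => b) = b := by
  cases b <;> simp [majority]; omega

lemma majority_comp_perm (σ : Equiv.Perm (Fin n)) (c : Fin n → Bool) :
    majority (c ∘ σ) = majority c := by
  have hcard : ∀ b,
      (univ.filter fun v => (c ∘ σ) v = b).card = (univ.filter fun v => c v = b).card := fun b => by
    simp only [card_filter, Function.comp_apply, Equiv.sum_comp σ fun v => if c v = b then 1 else 0]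
  simp only [majority, hcard]

lemma olfmC_comp_perm {σ : Equiv.Perm (Fin n)} (hσ : ∀ a b, (σ a, σ b) ∈ E ↔ (a, b) ∈ E)
    (x : Fin n → Bool) : olfmC E (x ∘ σ) = olfmC E x := by
  rw [olfmC, olfmVec_comp_perm hσ, majority_comp_perm, olfmC]

end CollectiveDecision

section Satisfaction

variable {n : ℕ} {C : (Fin n → Bool) → Bool}

lemma SAT_eq_two_pow {i : Fin n} (hC : ∀ x, C x = x i) : SAT C i = 2 ^ n := by
  simp [SAT, hC]

lemma SAT_perm {σ : Equiv.Perm (Fin n)} (hC : ∀ x, C (x ∘ σ) = C x) (i : Fin n) :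
    SAT C (σ i) = SAT C i := by
  refine card_bij' (fun x _ => x ∘ σ) (fun x _ => x ∘ σ.symm) (fun x hx => ?_) (fun x hx => ?_)
    (fun x _ => ?_) (fun x _ => ?_)
  · simp only [mem_filter, mem_univ, true_and] at hx ⊢
    rw [hC, Function.comp_apply, hx]
  · simp only [mem_filter, mem_univ, true_and] at hx ⊢
    rw [← hC, Function.comp_assoc, Equiv.symm_comp_self, Function.comp_id, hx, Function.comp_apply,
      Equiv.symm_apply_apply]
  · simp [Function.comp_assoc]
  · simp [Function.comp_assoc]

lemma two_mul_SAT_eq_of_update {i : Fin n} (hC : ∀ x b, C (Function.update x i b) = C x) :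
    2 * SAT C i = 2 ^ n := by
  let flip : (Fin n → Bool) → Fin n → Bool := fun x => Function.update x i (!x i)
  have hflip : Function.Involutive flip := fun x => by simp [flip]
  have hflip_eq : ∀ x, (C (flip x) = flip x i) ↔ ¬C x = x i := fun x => by
    rw [hC, show flip x i = !x i from Function.update_self .., Bool.eq_not_iff]
  have hagree : (univ.filter fun x => C x = x i).card = (univ.filter fun x => ¬C x = x i).card := by
    refine card_bij' (fun x _ => flip x) (fun x _ => flip x) (fun x hx => ?_) (fun x hx => ?_)
      (fun x _ => hflip x) (fun x _ => hflip x) <;>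
      simp only [mem_univ, true_and, mem_filter] at hx ⊢
    · exact fun h => (hflip_eq x).mp h hx
    · exact (hflip_eq x).mpr hx
  have htotal := card_filter_add_card_filter_not (s := univ) fun x : Fin n → Bool => C x = x i
  rw [← hagree, card_univ, Fintype.card_fun, Fintype.card_bool, Fintype.card_fin] at htotal
  rw [SAT, two_mul, htotal]

end Satisfaction

theorem olfm_basic_properties_general (n : ℕ) (E : Finset (Fin n × Fin n))
    (layer : Fin n → ℕ) (hL : IsLayered E layer) :
    -- (1) symmetry
    (∀ i j : Fin n, i ≠ j → succs E i = succs E j → preds E i = preds E j →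
      SAT (olfmC E) i = SAT (olfmC E) j) ∧
    -- (2) dictator property
    (∀ i : Fin n, succs E i = Finset.univ \ {i} → SAT (olfmC E) i = 2 ^ n) ∧
    -- (3) dictated independence
    (∀ (E' : Finset (Fin n × Fin n)) (layer' : Fin n → ℕ), IsLayered E' layer' →
      ∀ i : Fin n, (preds E i).card = 1 → (preds E' i).card = 1 →
      SAT (olfmC E) i = SAT (olfmC E') i) := by
  refine ⟨fun i j _ hs hp => ?_, fun i hs => ?_, fun E' layer' hL' i hi hi' => ?_⟩
  · rw [← Equiv.swap_apply_left i j]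
    exact (SAT_perm (olfmC_comp_perm (mem_swap_swap_iff hs hp)) i).symm
  · refine SAT_eq_two_pow fun x => ?_
    rw [olfmC, olfmVec_eq_const_of_succs_eq hL hs, majority_const i.pos]
  · have h := two_mul_SAT_eq_of_update (olfmC_update_of_card_preds_eq_one hL hi)
    have h' := two_mul_SAT_eq_of_update (olfmC_update_of_card_preds_eq_one hL' hi')
    omega

/-- Basic properties of the satisfaction score in OLFM systems: symmetry, the
dictator property, and dictated independence. -/
theorem olfm_basic_properties (n : ℕ) (hn : Odd n) (E : Finset (Fin n × Fin n))
    (layer : Fin n → ℕ) (hL : IsLayered E layer) :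
    -- (1) symmetry
    (∀ i j : Fin n, i ≠ j → succs E i = succs E j → preds E i = preds E j →
      SAT (olfmC E) i = SAT (olfmC E) j) ∧
    -- (2) dictator property
    (∀ i : Fin n, succs E i = Finset.univ \ {i} → SAT (olfmC E) i = 2 ^ n) ∧
    -- (3) dictated independence
    (∀ (E' : Finset (Fin n × Fin n)) (layer' : Fin n → ℕ), IsLayered E' layer' →
      ∀ i : Fin n, (preds E i).card = 1 → (preds E' i).card = 1 →
      SAT (olfmC E) i = SAT (olfmC E') i) :=
  olfm_basic_properties_general n E layer hL
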